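/- arXiv:2507.15529 — 7 statements merged into one kernel-verified Lean document; each statement's English description precedes it below -/
import Mathlib

section
/- Fix α ∈ [0,1) and a total preorder R on the finite set Ω of sorted n-tuples over S, and assume 𝒢(Ω(x,R), α) is nonempty for every x ∈ Ω. Then B_R^* is conditionally optimal with respect to R: for every valid level-(1−α) lower confidence bound B that is consistent with R and every x ∈ Ω, B(x) ≤ B_R^*(x). -/
noncomputable section

/-- Distributions on the finite support `S`, viewed as points of the probability
simplex inside `EuclideanSpace ℝ S` (Euclidean metric). -/
def distSet (S : Finset ℝ) : Set (EuclideanSpace ℝ ↥S) :=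
  {F | (∀ s, 0 ≤ F s) ∧ ∑ s, F s = 1}

/-- Mean of a distribution on `S`. -/
def distMean (S : Finset ℝ) (F : EuclideanSpace ℝ ↥S) : ℝ :=
  ∑ s : ↥S, F s * (s : ℝ)

open Classical in
/-- `P_F[A]`: probability of a set `A` of `n`-tuples under `n` i.i.d. draws from `F`. -/
def probOf (S : Finset ℝ) (n : ℕ) (F : EuclideanSpace ℝ ↥S)
    (A : Set (Fin n → ↥S)) : ℝ :=
  ∑ y : Fin n → ↥S, if y ∈ A then ∏ i, F (y i) else 0

/-- The interior likely set `𝒢(A, α)`. -/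
def intLikely (S : Finset ℝ) (n : ℕ) (A : Set (Fin n → ↥S)) (α : ℝ) :
    Set (EuclideanSpace ℝ ↥S) :=
  {F | F ∈ distSet S ∧ α < probOf S n F A}

/-- The likely set `𝒻(A, α)`: the closure of `𝒢(A, α)`. -/
def likely (S : Finset ℝ) (n : ℕ) (A : Set (Fin n → ↥S)) (α : ℝ) :
    Set (EuclideanSpace ℝ ↥S) :=
  closure (intLikely S n A α)

/-- `Ω`: the set of nondecreasing (`sorted`) `n`-tuples over `S`. -/
def sortedTuples (S : Finset ℝ) (n : ℕ) : Set (Fin n → ↥S) :=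
  {x | Monotone x}

/-- The sorted version of a tuple. -/
def sortTup (S : Finset ℝ) (n : ℕ) (y : Fin n → ↥S) : Fin n → ↥S :=
  y ∘ Tuple.sort y

/-- Probability of a set `A ⊆ Ω` of sorted tuples, identifying tuples with
their sorted versions. -/
def probSorted (S : Finset ℝ) (n : ℕ) (F : EuclideanSpace ℝ ↥S)
    (A : Set (Fin n → ↥S)) : ℝ :=
  probOf S n F {y | sortTup S n y ∈ A}

/-- Interior likely set for a set of sorted tuples. -/
def intLikelySorted (S : Finset ℝ) (n : ℕ) (A : Set (Fin n → ↥S)) (α : ℝ) :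
    Set (EuclideanSpace ℝ ↥S) :=
  {F | F ∈ distSet S ∧ α < probSorted S n F A}

/-- Likely set for a set of sorted tuples. -/
def likelySorted (S : Finset ℝ) (n : ℕ) (A : Set (Fin n → ↥S)) (α : ℝ) :
    Set (EuclideanSpace ℝ ↥S) :=
  closure (intLikelySorted S n A α)

/-- Upper set `Ω(x, R)` of `x` under a relation `R` on `Ω`. -/
def upperSet (S : Finset ℝ) (n : ℕ) (r : (Fin n → ↥S) → (Fin n → ↥S) → Prop)
    (x : Fin n → ↥S) : Set (Fin n → ↥S) :=
  {y ∈ sortedTuples S n | r x y}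

/-- Pessimal bound `B_R^*(x) = inf {E[F] : F ∈ 𝒻(Ω(x,R), α)}`. -/
def pessimal (S : Finset ℝ) (n : ℕ) (r : (Fin n → ↥S) → (Fin n → ↥S) → Prop)
    (α : ℝ) (x : Fin n → ↥S) : ℝ :=
  sInf (distMean S '' likelySorted S n (upperSet S n r x) α)

/-- `B` is a valid level-`(1-α)` lower confidence bound for the mean:
for every distribution `F` on `S`, the probability (under `n` i.i.d. draws
from `F`, identifying tuples with their sorted versions) that `B` does not
exceed `E[F]` is at least `1 - α`. -/
def validBound (S : Finset ℝ) (n : ℕ) (α : ℝ) (B : (Fin n → ↥S) → ℝ) : Prop :=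
  ∀ F ∈ distSet S, 1 - α ≤ probOf S n F {y | B (sortTup S n y) ≤ distMean S F}

lemma total_prob (S : Finset ℝ) (n : ℕ) (F : EuclideanSpace ℝ ↥S)
    (hF : F ∈ distSet S) :
    ∑ y : Fin n → ↥S, ∏ i, F (y i) = 1 := by
  classical
  rw [← Fintype.piFinset_univ, ← Finset.prod_univ_sum]
  simp [← Finset.univ_eq_attach, hF.2]

lemma prob_add_le (S : Finset ℝ) (n : ℕ) (F : EuclideanSpace ℝ ↥S)
    (hF : F ∈ distSet S) (A C : Set (Fin n → ↥S)) (h : ∀ y, y ∈ A → y ∉ C) :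
    probOf S n F A + probOf S n F C ≤ 1 := by
  classical
  rw [← total_prob S n F hF]
  unfold probOf
  rw [← Finset.sum_add_distrib]
  apply Finset.sum_le_sum
  intro y _
  have hp : 0 ≤ ∏ i, F (y i) := Finset.prod_nonneg fun i _ => hF.1 _
  by_cases hA : y ∈ A
  · simp [hA, h y hA]
  · by_cases hC : y ∈ C <;> simp [hA, hC, hp]

/-- `B_R^*` is conditionally optimal with respect to a total
preorder `R` on `Ω`: every valid level-`(1-α)` lower confidence bound `B` that
is consistent with `R` (i.e. consistent with every total order on `Ω` agreeing
with `R`) satisfies `B x ≤ B_R^*(x)` for every `x ∈ Ω`. -/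
theorem stmt5 (S : Finset ℝ) (hS : S.Nonempty) (n : ℕ) (hn : 1 ≤ n)
    (α : ℝ) (hα0 : 0 ≤ α) (hα1 : α < 1)
    (r : (Fin n → ↥S) → (Fin n → ↥S) → Prop)
    (hrefl : ∀ x ∈ sortedTuples S n, r x x)
    (htrans : ∀ x ∈ sortedTuples S n, ∀ y ∈ sortedTuples S n, ∀ z ∈ sortedTuples S n,
      r x y → r y z → r x z)
    (htotal : ∀ x ∈ sortedTuples S n, ∀ y ∈ sortedTuples S n, r x y ∨ r y x)
    (hne : ∀ x ∈ sortedTuples S n, (intLikelySorted S n (upperSet S n r x) α).Nonempty)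
    (B : (Fin n → ↥S) → ℝ)
    (hvalid : validBound S n α B)
    (hcons : ∀ t : (Fin n → ↥S) → (Fin n → ↥S) → Prop,
      (∀ x ∈ sortedTuples S n, t x x) →
      (∀ x ∈ sortedTuples S n, ∀ y ∈ sortedTuples S n, ∀ z ∈ sortedTuples S n,
        t x y → t y z → t x z) →
      (∀ x ∈ sortedTuples S n, ∀ y ∈ sortedTuples S n, t x y → t y x → x = y) →
      (∀ x ∈ sortedTuples S n, ∀ y ∈ sortedTuples S n, t x y ∨ t y x) →
      (∀ x ∈ sortedTuples S n, ∀ y ∈ sortedTuples S n,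
        (r x y ∧ ¬ r y x) → (t x y ∧ ¬ t y x)) →
      ∀ x ∈ sortedTuples S n, ∀ y ∈ sortedTuples S n, t x y → B x ≤ B y) :
    ∀ x ∈ sortedTuples S n, B x ≤ pessimal S n r α x := by
  classical
  intro x hx
  set e := Fintype.equivFin (Fin n → ↥S) with he
  set w : (Fin n → ↥S) → ℕ := fun y => if y = x then 0 else (e y : ℕ) + 1 with hw
  have hwinj : ∀ a b, w a = w b → a = b := by
    intro a b hab
    simp only [hw] at hab
    by_cases ha : a = x <;> by_cases hb : b = x
    · rw [ha, hb]
    · simp [ha, hb] at hab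
    · simp [ha, hb] at hab
    · simp only [ha, hb, if_neg, ite_false, Nat.add_right_cancel_iff] at hab
      exact e.injective (Fin.val_injective hab)
  set t : (Fin n → ↥S) → (Fin n → ↥S) → Prop :=
    fun a b => (r a b ∧ ¬ r b a) ∨ (r a b ∧ r b a ∧ w a ≤ w b) with ht
  have hBle : ∀ y ∈ sortedTuples S n, r x y → B x ≤ B y := by
    intro y hy hxy
    refine hcons t ?_ ?_ ?_ ?_ ?_ x hx y hy ?_
    · intro a ha; exact Or.inr ⟨hrefl a ha, hrefl a ha, le_rfl⟩
    · intro a ha b hb c hc hab hbc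
      rcases hab with ⟨rab, nba⟩ | ⟨rab, rba, wab⟩ <;>
        rcases hbc with ⟨rbc, ncb⟩ | ⟨rbc, rcb, wbc⟩
      · exact Or.inl ⟨htrans a ha b hb c hc rab rbc,
          fun rca => nba (htrans b hb c hc a ha rbc rca)⟩
      · exact Or.inl ⟨htrans a ha b hb c hc rab rbc,
          fun rca => nba (htrans b hb c hc a ha rbc rca)⟩
      · exact Or.inl ⟨htrans a ha b hb c hc rab rbc,
          fun rca => ncb (htrans c hc a ha b hb rca rab)⟩
      · exact Or.inr ⟨htrans a ha b hb c hc rab rbc,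
          htrans c hc b hb a ha rcb rba, le_trans wab wbc⟩
    · intro a _ b _ hab hba
      rcases hab with ⟨rab, nba⟩ | ⟨rab, rba, wab⟩
      · rcases hba with ⟨rba, _⟩ | ⟨rba, _, _⟩ <;> exact absurd rba nba
      · rcases hba with ⟨_, nab⟩ | ⟨_, _, wba⟩
        · exact absurd rab nab
        · exact hwinj a b (le_antisymm wab wba)
    · intro a ha b hb
      rcases htotal a ha b hb with rab | rba
      · by_cases rba : r b a
        · rcases le_total (w a) (w b) with h | h
          · exact Or.inl (Or.inr ⟨rab, rba, h⟩)
          · exact Or.inr (Or.inr ⟨rba, rab, h⟩)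
        · exact Or.inl (Or.inl ⟨rab, rba⟩)
      · by_cases rab : r a b
        · rcases le_total (w a) (w b) with h | h
          · exact Or.inl (Or.inr ⟨rab, rba, h⟩)
          · exact Or.inr (Or.inr ⟨rba, rab, h⟩)
        · exact Or.inr (Or.inl ⟨rba, rab⟩)
    · rintro a _ b _ ⟨rab, nba⟩
      refine ⟨Or.inl ⟨rab, nba⟩, ?_⟩
      rintro (⟨rba, _⟩ | ⟨rba, _, _⟩) <;> exact nba rba
    · by_cases ryx : r y x
      · exact Or.inr ⟨hxy, ryx, by simp [hw]⟩
      · exact Or.inl ⟨hxy, ryx⟩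
  have hmain : ∀ F ∈ intLikelySorted S n (upperSet S n r x) α, B x ≤ distMean S F := by
    rintro F ⟨hF, hprob⟩
    by_contra hlt
    push_neg at hlt
    have hdisj : ∀ y, y ∈ {y | sortTup S n y ∈ upperSet S n r x} →
        y ∉ {y | B (sortTup S n y) ≤ distMean S F} := by
      intro y hy hy2
      have h1 : B x ≤ B (sortTup S n y) := hBle (sortTup S n y) hy.1 hy.2
      have h2 : B (sortTup S n y) ≤ distMean S F := hy2
      linarith
    have h1 := prob_add_le S n F hF _ _ hdisj
    have h2 := hvalid F hF
    have h3 : α < probOf S n F {y | sortTup S n y ∈ upperSet S n r x} := hprob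
    linarith
  have hcont : Continuous (distMean S) := by
    unfold distMean
    exact continuous_finset_sum _ fun s _ =>
      ((EuclideanSpace.proj s).continuous).mul continuous_const
  have hsub : likelySorted S n (upperSet S n r x) α ⊆ {F | B x ≤ distMean S F} :=
    closure_minimal (fun F hF => hmain F hF) (isClosed_le continuous_const hcont)
  obtain ⟨F0, hF0⟩ := hne x hx
  refine le_csInf ⟨distMean S F0, F0, subset_closure hF0, rfl⟩ ?_
  rintro m ⟨F, hF, rfl⟩
  exact hsub hF

end
end

section
/- Fix α ∈ [0,1) and s ∈ S, and let 𝑺 = (s, …, s) be the constant n-tuple. Then inf{E[F] : F ∈ 𝒻({𝑺}, α)} = S_min·(1 − α^{1/n}) + s·α^{1/n}. (Note that P_F[{𝑺}] = F(s)^n, so 𝒢({𝑺}, α) = {F : F(s)^n > α}.) -/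
noncomputable section

/-! The bound comes from the closed set `{F | α^{1/n} ≤ F s}` containing `𝒻({𝑺}, α)`: on it,
`E[F] - S_min = ∑ F(t) (t - S_min) ≥ F(s) (s - S_min) ≥ α^{1/n} (s - S_min)`. Equality is attained
by the two-point distribution putting mass `α^{1/n}` on `s` and the rest on `S_min`, which is a limit
of two-point distributions putting slightly more mass on `s`, and those lie in `𝒢({𝑺}, α)`. -/

open Filter Topology

lemma probOf_singleton (S : Finset ℝ) (n : ℕ) (F : EuclideanSpace ℝ ↥S) (y : Fin n → ↥S) :
    probOf S n F {y} = ∏ i, F (y i) := by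
  classical
  simp [probOf, Finset.sum_ite_eq']

lemma probOf_singleton_const (S : Finset ℝ) (n : ℕ) (F : EuclideanSpace ℝ ↥S) (s : ↥S) :
    probOf S n F {fun _ => s} = F s ^ n := by
  simp [probOf_singleton]

lemma isClosed_distSet (S : Finset ℝ) : IsClosed (distSet S) := by
  have hc (t : ↥S) : Continuous fun F : EuclideanSpace ℝ ↥S => F t := PiLp.continuous_apply 2 _ t
  simp only [distSet, Set.ofPred_and, Set.ofPred_forall]
  exact (isClosed_iInter fun t => isClosed_le continuous_const (hc t)).inter
    (isClosed_eq (continuous_finsetSum _ fun t _ => hc t) continuous_const)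

lemma distMean_sub_eq_sum (S : Finset ℝ) {F : EuclideanSpace ℝ ↥S} (hF : F ∈ distSet S) (m : ℝ) :
    distMean S F - m = ∑ t, F t * ((t : ℝ) - m) := by
  simp only [distMean, mul_sub, Finset.sum_sub_distrib, ← Finset.sum_mul, hF.2, one_mul]

lemma min'_add_mul_le_distMean (S : Finset ℝ) (hS : S.Nonempty) {F : EuclideanSpace ℝ ↥S}
    (hF : F ∈ distSet S) (s : ↥S) :
    S.min' hS + F s * ((s : ℝ) - S.min' hS) ≤ distMean S F := by
  have hterm (t : ↥S) : 0 ≤ F t * ((t : ℝ) - S.min' hS) :=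
    mul_nonneg (hF.1 t) (sub_nonneg.2 (S.min'_le t t.2))
  have := Finset.single_le_sum (fun t _ => hterm t) (Finset.mem_univ s)
  linarith [distMean_sub_eq_sum S hF (S.min' hS)]

lemma likely_singleton_const_subset (S : Finset ℝ) (n : ℕ) (β : ℝ) (s : ↥S) :
    likely S n {fun _ => s} (β ^ n) ⊆ {F | F ∈ distSet S ∧ β ≤ F s} := by
  refine closure_minimal ?_ ((isClosed_distSet S).inter
    (isClosed_le continuous_const (PiLp.continuous_apply 2 _ s)))
  rintro F ⟨hF, hprob⟩
  rw [probOf_singleton_const] at hprob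
  exact ⟨hF, (lt_of_pow_lt_pow_left₀ n (hF.1 s) hprob).le⟩

def twoPoint {S : Finset ℝ} (a b : ↥S) (p : ℝ) : EuclideanSpace ℝ ↥S :=
  p • EuclideanSpace.single a 1 + (1 - p) • EuclideanSpace.single b 1

section twoPoint

variable {S : Finset ℝ} (a b : ↥S)

lemma twoPoint_apply (p : ℝ) (t : ↥S) :
    twoPoint a b p t = p * (if t = a then 1 else 0) + (1 - p) * (if t = b then 1 else 0) := by
  simp [twoPoint, PiLp.single_apply]

lemma twoPoint_mem_distSet {p : ℝ} (hp0 : 0 ≤ p) (hp1 : p ≤ 1) : twoPoint a b p ∈ distSet S := by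
  refine ⟨fun t => ?_, ?_⟩
  · rw [twoPoint_apply]
    have : 0 ≤ 1 - p := sub_nonneg.2 hp1
    positivity
  · simp [twoPoint_apply, Finset.sum_add_distrib]

lemma le_twoPoint_apply_left {p : ℝ} (hp1 : p ≤ 1) : p ≤ twoPoint a b p a := by
  rw [twoPoint_apply, if_pos rfl]
  split_ifs <;> linarith

lemma distMean_twoPoint (p : ℝ) : distMean S (twoPoint a b p) = p * a + (1 - p) * b := by
  simp [distMean, twoPoint_apply, add_mul, Finset.sum_add_distrib]

lemma continuous_twoPoint : Continuous (twoPoint a b) := by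
  unfold twoPoint
  fun_prop

end twoPoint

lemma twoPoint_mem_likely_singleton_const (S : Finset ℝ) {n : ℕ} (hn : n ≠ 0) {β : ℝ}
    (hβ0 : 0 ≤ β) (hβ1 : β < 1) (s m : ↥S) :
    twoPoint s m β ∈ likely S n {fun _ => s} (β ^ n) := by
  have hlim : Tendsto (twoPoint s m) (𝓝[>] β) (𝓝 (twoPoint s m β)) :=
    ((continuous_twoPoint s m).tendsto β).mono_left nhdsWithin_le_nhds
  refine mem_closure_of_tendsto hlim ?_
  filter_upwards [Ioo_mem_nhdsGT hβ1] with p ⟨hβp, hp1⟩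
  refine ⟨twoPoint_mem_distSet s m (hβ0.trans hβp.le) hp1.le, ?_⟩
  rw [probOf_singleton_const]
  exact pow_lt_pow_left₀ (hβp.trans_le (le_twoPoint_apply_left s m hp1.le)) hβ0 hn

theorem isLeast_distMean_likely_singleton_const (S : Finset ℝ) (hS : S.Nonempty) {n : ℕ}
    (hn : n ≠ 0) {β : ℝ} (hβ0 : 0 ≤ β) (hβ1 : β < 1) (s : ↥S) :
    IsLeast (distMean S '' likely S n {fun _ => s} (β ^ n))
      (S.min' hS * (1 - β) + (s : ℝ) * β) := by
  set m : ↥S := ⟨S.min' hS, S.min'_mem hS⟩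
  constructor
  · refine ⟨twoPoint s m β, twoPoint_mem_likely_singleton_const S hn hβ0 hβ1 s m, ?_⟩
    rw [distMean_twoPoint]
    ring
  · rintro _ ⟨F, hF, rfl⟩
    obtain ⟨hFdist, hβF⟩ := likely_singleton_const_subset S n β s hF
    have hsm : S.min' hS ≤ s := S.min'_le s s.2
    nlinarith [min'_add_mul_le_distMean S hS hFdist s]

/-- the optimal bound at the homogeneous sample `𝑺 = (s,…,s)`:
`inf {E[F] : F ∈ 𝒻({𝑺}, α)} = S_min (1 - α^{1/n}) + s α^{1/n}`. -/
theorem stmt7 (S : Finset ℝ) (hS : S.Nonempty) (n : ℕ) (hn : 1 ≤ n)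
    (α : ℝ) (hα0 : 0 ≤ α) (hα1 : α < 1) (s : ↥S) :
    sInf (distMean S '' likely S n {fun _ => s} α) =
      S.min' hS * (1 - α ^ ((1 : ℝ) / n)) + (s : ℝ) * α ^ ((1 : ℝ) / n) := by
  have hn0 : n ≠ 0 := Nat.one_le_iff_ne_zero.1 hn
  have hroot : (α ^ ((1 : ℝ) / n)) ^ n = α := by
    rw [one_div, Real.rpow_inv_natCast_pow hα0 hn0]
  conv_lhs => rw [← hroot]
  exact (isLeast_distMean_likely_singleton_const S hS hn0 (Real.rpow_nonneg hα0 _)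
    (Real.rpow_lt_one hα0 hα1 (by positivity)) s).csInf_eq

end
end

section
/- Let T be any monotone total order on the set Ω of nondecreasing n-tuples over S, let c ∈ S, and let 𝑪 = (c, …, c) be the constant n-tuple. Then Ω(𝑪, T_ℓ) ⊆ Ω(𝑪, T) ⊆ Ω(𝑪, T_h), where Ω(x, T') = {y ∈ Ω : x ≤_{T'} y} denotes the upper set of x under a total order T'. -/
/-- Low lexicographic order: `x ≤_{T_ℓ} y` iff `x = y` or `x i < y i` at the
smallest index `i` where `x` and `y` differ. -/
def lexLowLE {n : ℕ} {α : Type*} [LinearOrder α] (x y : Fin n → α) : Prop :=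
  x = y ∨ ∃ i, x i < y i ∧ ∀ j, j < i → x j = y j

/-- High lexicographic order: `x ≤_{T_h} y` iff `x = y` or `x i < y i` at the
largest index `i` where `x` and `y` differ. -/
def lexHighLE {n : ℕ} {α : Type*} [LinearOrder α] (x y : Fin n → α) : Prop :=
  x = y ∨ ∃ i, x i < y i ∧ ∀ j, i < j → x j = y j

/-- for any monotone total order `T` on `Ω` and constant tuple
`𝑪 = (c,…,c)`, the upper sets satisfy `Ω(𝑪, T_ℓ) ⊆ Ω(𝑪, T) ⊆ Ω(𝑪, T_h)`. -/
theorem stmt11 (S : Finset ℝ) (hS : S.Nonempty) (n : ℕ) (hn : 1 ≤ n)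
    (t : (Fin n → ↥S) → (Fin n → ↥S) → Prop)
    (hrefl : ∀ x ∈ sortedTuples S n, t x x)
    (htrans : ∀ x ∈ sortedTuples S n, ∀ y ∈ sortedTuples S n, ∀ z ∈ sortedTuples S n,
      t x y → t y z → t x z)
    (hantisymm : ∀ x ∈ sortedTuples S n, ∀ y ∈ sortedTuples S n, t x y → t y x → x = y)
    (htotal : ∀ x ∈ sortedTuples S n, ∀ y ∈ sortedTuples S n, t x y ∨ t y x)
    (hmono : ∀ x ∈ sortedTuples S n, ∀ y ∈ sortedTuples S n, (∀ i, x i ≤ y i) → t x y)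
    (c : ↥S) :
    {y ∈ sortedTuples S n | lexLowLE (fun _ => c) y} ⊆
        {y ∈ sortedTuples S n | t (fun _ => c) y} ∧
      {y ∈ sortedTuples S n | t (fun _ => c) y} ⊆
        {y ∈ sortedTuples S n | lexHighLE (fun _ => c) y} := by
  have hC : (fun _ : Fin n => c) ∈ sortedTuples S n := monotone_const
  constructor
  · rintro y ⟨hym, hlex⟩
    refine ⟨hym, ?_⟩
    rcases hlex with h | ⟨i, hi, hj⟩
    · rw [← h]; exact hrefl _ hC
    · refine hmono _ hC _ hym fun k => ?_
      rcases lt_or_ge k i with h | h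
      · exact (hj k h).le
      · exact hi.le.trans (hym h)
  · rintro y ⟨hym, ht⟩
    refine ⟨hym, ?_⟩
    by_cases heq : (fun _ : Fin n => c) = y
    · exact Or.inl heq
    · right
      have hne : (Finset.univ.filter (fun i => y i ≠ c)).Nonempty := by
        by_contra h
        apply heq
        funext k
        rw [Finset.not_nonempty_iff_eq_empty, Finset.filter_eq_empty_iff] at h
        exact (not_not.mp (h (Finset.mem_univ k))).symm
      set i := (Finset.univ.filter (fun i => y i ≠ c)).max' hne with hidef
      have hmem : i ∈ Finset.univ.filter (fun i => y i ≠ c) := Finset.max'_mem _ hne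
      have hine : y i ≠ c := (Finset.mem_filter.mp hmem).2
      have hgt : ∀ j, i < j → y j = c := by
        intro j hj
        by_contra hjne
        have : j ≤ i := Finset.le_max' _ j (Finset.mem_filter.mpr ⟨Finset.mem_univ j, hjne⟩)
        exact absurd hj (not_lt.mpr this)
      rcases lt_or_gt_of_ne hine with hlt | hgt'
      · exfalso
        have hty : t y (fun _ => c) := by
          refine hmono _ hym _ hC fun k => ?_
          rcases le_or_gt k i with h | h
          · exact (hym h).trans hlt.le
          · exact (hgt k h).le
        have := hantisymm _ hC _ hym ht hty
        exact hine (congrFun this.symm i)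
      · exact ⟨i, hgt', fun j hj => (hgt j hj).symm⟩
end

section
/- Fix α ∈ [0,1) and s ∈ S with constant tuple 𝑺 = (s,…,s); assume 𝒢(Ω(z, T'), α) is nonempty for all z ∈ Ω and all total orders T' considered. For every monotone total order T on Ω: B_{T_h}^*(𝑺) ≤ B_T^*(𝑺) ≤ B_{T_ℓ}^*(𝑺); that is, among all pessimal bounds for monotone orders evaluated at homogeneous samples, B_{T_h}^* is the lowest and B_{T_ℓ}^* the highest. -/
noncomputable section

section myAux

variable (S : Finset ℝ) (n : ℕ)

lemma my_probSorted_mono {F : EuclideanSpace ℝ ↥S} (hF : ∀ s, 0 ≤ F s)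
    {A B : Set (Fin n → ↥S)} (hAB : A ⊆ B) :
    probSorted S n F A ≤ probSorted S n F B := by
  classical
  unfold probSorted probOf
  apply Finset.sum_le_sum
  intro y _
  by_cases h : sortTup S n y ∈ A
  · simp only [Set.mem_setOf_eq, h, hAB h, if_true]
    exact le_refl _
  · by_cases h2 : sortTup S n y ∈ B
    · simp only [Set.mem_setOf_eq, h, h2, if_true, if_false]
      exact Finset.prod_nonneg fun i _ => hF _
    · simp [Set.mem_setOf_eq, h, h2]

lemma my_distMean_continuous : Continuous (distMean S) := by
  unfold distMean
  exact continuous_finset_sum _ fun s _ =>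
    ((EuclideanSpace.proj (𝕜 := ℝ) s).continuous).mul continuous_const

lemma my_mean_lb (hS : S.Nonempty) {F : EuclideanSpace ℝ ↥S} (hF : F ∈ distSet S) :
    S.min' hS ≤ distMean S F := by
  have h1 : S.min' hS = ∑ s : ↥S, F s * S.min' hS := by
    rw [← Finset.sum_mul, hF.2, one_mul]
  rw [h1]
  unfold distMean
  apply Finset.sum_le_sum
  intro s _
  exact mul_le_mul_of_nonneg_left (S.min'_le _ s.2) (hF.1 s)

lemma my_likely_lb (hS : S.Nonempty) {A : Set (Fin n → ↥S)} {α : ℝ} :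
    likelySorted S n A α ⊆ {F | S.min' hS ≤ distMean S F} :=
  closure_minimal (fun _ hF => my_mean_lb S hS hF.1)
    (isClosed_le continuous_const (my_distMean_continuous S))

lemma my_pessimal_mono (hS : S.Nonempty) {A B : Set (Fin n → ↥S)} (hAB : A ⊆ B) {α : ℝ}
    (hne : (intLikelySorted S n A α).Nonempty) :
    sInf (distMean S '' likelySorted S n B α) ≤
      sInf (distMean S '' likelySorted S n A α) := by
  apply csInf_le_csInf
  · refine ⟨S.min' hS, ?_⟩
    rintro x ⟨F, hF, rfl⟩
    exact my_likely_lb S n hS hF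
  · exact (hne.mono subset_closure).image _
  · apply Set.image_mono
    apply closure_mono
    rintro F ⟨hF1, hF2⟩
    exact ⟨hF1, lt_of_lt_of_le hF2 (my_probSorted_mono S n hF1.1 hAB)⟩

end myAux

/-- at a homogeneous sample `𝑺 = (s,…,s)`, the pessimal bound of
any monotone total order `T` is sandwiched between those of the high and low
lexicographic orders: `B_{T_h}^*(𝑺) ≤ B_T^*(𝑺) ≤ B_{T_ℓ}^*(𝑺)`. -/
theorem stmt13 (S : Finset ℝ) (hS : S.Nonempty) (n : ℕ) (hn : 1 ≤ n)
    (α : ℝ) (hα0 : 0 ≤ α) (hα1 : α < 1)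
    (t : (Fin n → ↥S) → (Fin n → ↥S) → Prop)
    (hrefl : ∀ x ∈ sortedTuples S n, t x x)
    (htrans : ∀ x ∈ sortedTuples S n, ∀ y ∈ sortedTuples S n, ∀ z ∈ sortedTuples S n,
      t x y → t y z → t x z)
    (hantisymm : ∀ x ∈ sortedTuples S n, ∀ y ∈ sortedTuples S n, t x y → t y x → x = y)
    (htotal : ∀ x ∈ sortedTuples S n, ∀ y ∈ sortedTuples S n, t x y ∨ t y x)
    (hmono : ∀ x ∈ sortedTuples S n, ∀ y ∈ sortedTuples S n, (∀ i, x i ≤ y i) → t x y)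
    (hneT : ∀ z ∈ sortedTuples S n, (intLikelySorted S n (upperSet S n t z) α).Nonempty)
    (hneL : ∀ z ∈ sortedTuples S n, (intLikelySorted S n (upperSet S n lexLowLE z) α).Nonempty)
    (hneH : ∀ z ∈ sortedTuples S n, (intLikelySorted S n (upperSet S n lexHighLE z) α).Nonempty)
    (s : ↥S) :
    pessimal S n lexHighLE α (fun _ => s) ≤ pessimal S n t α (fun _ => s) ∧
      pessimal S n t α (fun _ => s) ≤ pessimal S n lexLowLE α (fun _ => s) := by
  have hconst : (fun _ : Fin n => s) ∈ sortedTuples S n := monotone_const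
  have h1 : upperSet S n lexLowLE (fun _ => s) ⊆ upperSet S n t (fun _ => s) := by
    rintro y ⟨hy, hlex⟩
    refine ⟨hy, ?_⟩
    apply hmono _ hconst _ hy
    intro k
    rcases hlex with h | ⟨i, hi, hj⟩
    · exact (congrFun h k).le
    · rcases lt_or_ge k i with hk | hk
      · exact (hj k hk).le
      · exact le_trans hi.le (hy hk)
  have h2 : upperSet S n t (fun _ => s) ⊆ upperSet S n lexHighLE (fun _ => s) := by
    rintro y ⟨hy, hty⟩
    refine ⟨hy, ?_⟩
    by_cases hcase : ∀ i, y i ≤ s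
    · exact Or.inl (hantisymm _ hconst _ hy hty (hmono _ hy _ hconst hcase))
    · push_neg at hcase
      obtain ⟨i, hi⟩ := hcase
      have hnpos : 0 < n := hn
      refine Or.inr ⟨⟨n - 1, Nat.sub_lt hnpos one_pos⟩, ?_, ?_⟩
      · refine lt_of_lt_of_le hi (hy ?_)
        exact Nat.le_pred_of_lt i.isLt
      · intro j hj
        exact absurd hj (not_lt.2 (Nat.le_pred_of_lt j.isLt))
  constructor
  · exact my_pessimal_mono S n hS h2 (hneT _ hconst)
  · exact my_pessimal_mono S n hS h1 (hneL _ hconst)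

end
end

section
/- Fix α ∈ [0,1) and s ∈ S, and let 𝑺 = (s,…,s) be the constant n-tuple. Then B_{T_ℓ}^*(𝑺) = S_min·(1 − α^{1/n}) + s·α^{1/n}. Equivalently, since Ω(𝑺, T_ℓ) = {y ∈ Ω : s ≤ y_i for all i} and hence P_F[Ω(𝑺, T_ℓ)] = (∑_{t∈S, t≥s} F(t))^n, one has inf{E[F] : F ∈ closure of {F : (∑_{t∈S, t≥s} F(t))^n > α}} = S_min·(1 − α^{1/n}) + s·α^{1/n}. -/
noncomputable section

open Finset in
lemma lex_const_iff {S : Finset ℝ} {n : ℕ} {s : ↥S} {y : Fin n → ↥S} (hy : Monotone y) :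
    lexLowLE (fun _ => s) y ↔ ∀ i, s ≤ y i := by
  classical
  constructor
  · rintro (h | ⟨i, hi, hj⟩)
    · intro k; exact (congrFun h k).le
    · intro k
      rcases lt_or_ge k i with hk | hk
      · exact (hj k hk).le
      · exact le_trans hi.le (hy hk)
  · intro h
    by_cases hc : (fun _ => s) = y
    · exact Or.inl hc
    · obtain ⟨i, hi⟩ := Function.ne_iff.mp hc
      have hT : (Finset.univ.filter (fun i => s < y i)).Nonempty :=
        ⟨i, by simp [lt_of_le_of_ne (h i) hi]⟩
      set i0 := (Finset.univ.filter (fun i => s < y i)).min' hT with hi0def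
      have hi0 : s < y i0 := by
        have := Finset.min'_mem _ hT
        simpa [hi0def] using this
      refine Or.inr ⟨i0, hi0, ?_⟩
      intro j hj
      by_contra hne
      have h1 : s < y j := lt_of_le_of_ne (h j) hne
      have h2 : i0 ≤ j := Finset.min'_le _ _ (by simpa using h1)
      exact absurd hj (not_lt.mpr h2)

lemma sort_mem_iff {S : Finset ℝ} {n : ℕ} (s : ↥S) (y : Fin n → ↥S) :
    sortTup S n y ∈ upperSet S n lexLowLE (fun _ => s) ↔ ∀ i, s ≤ y i := by
  have hmono : Monotone (sortTup S n y) := Tuple.monotone_sort y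
  constructor
  · rintro ⟨-, hlex⟩
    have h' : ∀ i, s ≤ sortTup S n y i := (lex_const_iff hmono).mp hlex
    intro k
    have := h' ((Tuple.sort y)⁻¹ k)
    simpa [sortTup] using this
  · intro h
    refine ⟨hmono, (lex_const_iff hmono).mpr ?_⟩
    intro i
    exact h _

open Finset in
lemma prob_formula {S : Finset ℝ} (n : ℕ) (F : EuclideanSpace ℝ ↥S) (s : ↥S) :
    probSorted S n F (upperSet S n lexLowLE (fun _ => s)) =
      (∑ t ∈ Finset.univ.filter (fun t : ↥S => s ≤ t), F t) ^ n := by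
  classical
  unfold probSorted probOf
  calc (∑ y : Fin n → ↥S,
          if y ∈ {y | sortTup S n y ∈ upperSet S n lexLowLE (fun _ => s)}
          then ∏ i, F (y i) else 0)
      = ∑ y : Fin n → ↥S, if (∀ i, s ≤ y i) then ∏ i, F (y i) else 0 := by
        refine Finset.sum_congr rfl fun y _ => ?_
        simp only [Set.mem_setOf_eq]
        rw [if_congr (sort_mem_iff s y) rfl rfl]
    _ = ∑ y ∈ Fintype.piFinset
          (fun _ : Fin n => Finset.univ.filter (fun t : ↥S => s ≤ t)),
          ∏ i, F (y i) := by
        rw [← Finset.sum_filter]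
        apply Finset.sum_congr _ (fun _ _ => rfl)
        ext y
        simp [Fintype.mem_piFinset]
    _ = ∏ _i : Fin n, ∑ t ∈ Finset.univ.filter (fun t : ↥S => s ≤ t), F t :=
        (Finset.prod_univ_sum _ _).symm
    _ = _ := by rw [Finset.prod_const, Finset.card_univ, Fintype.card_fin]

/-- the pessimal bound for the low lexicographic order at the
homogeneous sample `𝑺 = (s,…,s)` equals `S_min (1 - α^{1/n}) + s α^{1/n}`. -/
theorem stmt14 (S : Finset ℝ) (hS : S.Nonempty) (n : ℕ) (hn : 1 ≤ n)
    (α : ℝ) (hα0 : 0 ≤ α) (hα1 : α < 1) (s : ↥S) :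
    pessimal S n lexLowLE α (fun _ => s) =
      S.min' hS * (1 - α ^ ((1 : ℝ) / n)) + (s : ℝ) * α ^ ((1 : ℝ) / n) := by
  classical
  set m : ℝ := S.min' hS with hm
  set β : ℝ := α ^ ((1 : ℝ) / n) with hβ
  set A : Set (Fin n → ↥S) := upperSet S n lexLowLE (fun _ => s) with hA
  set T : Finset ↥S := Finset.univ.filter (fun t : ↥S => s ≤ t) with hT
  have hn0 : (n : ℝ) ≠ 0 := Nat.cast_ne_zero.mpr (by omega)
  have hnpos : 0 < (1 : ℝ) / n := by positivity
  have hβ0 : 0 ≤ β := Real.rpow_nonneg hα0 _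
  have hβ1 : β < 1 := Real.rpow_lt_one hα0 hα1 hnpos
  have hβn : β ^ n = α := by
    rw [hβ, ← Real.rpow_natCast (α ^ ((1:ℝ)/n)) n, ← Real.rpow_mul hα0,
      one_div_mul_cancel hn0, Real.rpow_one]
  have mElt : ↥S := ⟨m, S.min'_mem hS⟩
  have hms : m ≤ (s : ℝ) := S.min'_le _ s.2
  -- the family of distributions
  set F : ℝ → EuclideanSpace ℝ ↥S := fun g =>
    (1 - g) • EuclideanSpace.single (⟨m, S.min'_mem hS⟩ : ↥S) (1:ℝ)
      + g • EuclideanSpace.single s (1:ℝ) with hF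
  have hFapp : ∀ g t, F g t =
      (1 - g) * (if t = (⟨m, S.min'_mem hS⟩ : ↥S) then 1 else 0)
        + g * (if t = s then 1 else 0) := by
    intro g t
    simp [hF, EuclideanSpace.single_apply]
  -- mean of F g
  have hFmean : ∀ g, distMean S (F g) = (1 - g) * m + g * s := by
    intro g
    unfold distMean
    have : ∀ t : ↥S, F g t * (t : ℝ) =
        (if t = (⟨m, S.min'_mem hS⟩ : ↥S) then (1 - g) * (t:ℝ) else 0)
          + (if t = s then g * (t:ℝ) else 0) := by
      intro t
      rw [hFapp]
      by_cases h1 : t = (⟨m, S.min'_mem hS⟩ : ↥S) <;> by_cases h2 : t = s <;>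
        simp [h1, h2] <;> split_ifs <;> ring
    rw [Finset.sum_congr rfl fun t _ => this t, Finset.sum_add_distrib,
      Finset.sum_ite_eq' Finset.univ, Finset.sum_ite_eq' Finset.univ]
    simp
  -- membership of F g in the interior likely set for g ∈ (β, 1)
  have hmem : ∀ g ∈ Set.Ioo β 1, F g ∈ intLikelySorted S n A α := by
    rintro g ⟨hg1, hg2⟩
    have hg0 : 0 ≤ g := hβ0.trans hg1.le
    have hFg0 : ∀ t, 0 ≤ F g t := by
      intro t
      rw [hFapp]
      have : (0:ℝ) ≤ 1 - g := by linarith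
      positivity
    refine ⟨⟨hFg0, ?_⟩, ?_⟩
    · have : ∀ t : ↥S, F g t =
          (if t = (⟨m, S.min'_mem hS⟩ : ↥S) then (1 - g) else 0)
            + (if t = s then g else 0) := by
        intro t
        rw [hFapp]
        by_cases h1 : t = (⟨m, S.min'_mem hS⟩ : ↥S) <;> by_cases h2 : t = s <;>
          simp [h1, h2]
      rw [Finset.sum_congr rfl fun t _ => this t, Finset.sum_add_distrib,
        Finset.sum_ite_eq' Finset.univ, Finset.sum_ite_eq' Finset.univ]
      simp
    · rw [hA, prob_formula n (F g) s]
      have hs_mem : s ∈ T := by simp [hT]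
      have hFs : g ≤ F g s := by
        rw [hFapp]
        have : (0:ℝ) ≤ 1 - g := by linarith
        have h0 : (0:ℝ) ≤ (1 - g) * (if s = (⟨m, S.min'_mem hS⟩ : ↥S) then 1 else 0) := by positivity
        simp only [eq_self_iff_true, if_true, mul_one]
        linarith
      have hq : g ≤ ∑ t ∈ T, F g t :=
        hFs.trans (Finset.single_le_sum (fun t _ => hFg0 t) hs_mem)
      calc α = β ^ n := hβn.symm
        _ < g ^ n := by
            apply pow_lt_pow_left₀ hg1 hβ0
            omega
        _ ≤ (∑ t ∈ T, F g t) ^ n := pow_le_pow_left₀ hg0 hq n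
  -- continuity of the mean
  have hmean_cont : Continuous (distMean S) := by
    unfold distMean
    exact continuous_finset_sum _ fun t _ =>
      ((EuclideanSpace.proj (𝕜 := ℝ) t).continuous.mul continuous_const)
  -- F β is in the closure
  have hcl : F β ∈ likelySorted S n A α := by
    have hFcont : Continuous F := by
      rw [hF]; fun_prop
    have htend : Filter.Tendsto F (nhdsWithin β (Set.Ioi β)) (nhds (F β)) :=
      (hFcont.tendsto β).mono_left nhdsWithin_le_nhds
    refine mem_closure_of_tendsto htend ?_
    filter_upwards [Ioo_mem_nhdsGT_of_mem ⟨le_refl β, hβ1⟩] with g hg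
    exact hmem g hg
  -- lower bound on closure
  have hlb : likelySorted S n A α ⊆ {G | m * (1 - β) + (s:ℝ) * β ≤ distMean S G} := by
    apply closure_minimal _ (isClosed_le continuous_const hmean_cont)
    rintro G ⟨⟨hGpos, hGsum⟩, hGprob⟩
    rw [hA, prob_formula n G s] at hGprob
    set q : ℝ := ∑ t ∈ T, G t with hq
    have hq0 : 0 ≤ q := Finset.sum_nonneg fun t _ => hGpos t
    have hβq : β ≤ q := by
      have h1 : β ≤ (q ^ n) ^ ((1:ℝ)/n) :=
        Real.rpow_le_rpow hα0 hGprob.le hnpos.le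
      have h2 : (q ^ n) ^ ((1:ℝ)/n) = q := by
        rw [← Real.rpow_natCast q n, ← Real.rpow_mul hq0,
          mul_one_div_cancel hn0, Real.rpow_one]
      rwa [h2] at h1
    have key : q * s + (1 - q) * m ≤ distMean S G := by
      unfold distMean
      have h1 : ∀ t : ↥S, G t * (if s ≤ t then (s:ℝ) else m) ≤ G t * (t:ℝ) := by
        intro t
        apply mul_le_mul_of_nonneg_left _ (hGpos t)
        by_cases h : s ≤ t
        · simpa [h] using h
        · simpa [h] using S.min'_le _ t.2
      have h2 : (∑ t : ↥S, G t * (if s ≤ t then (s:ℝ) else m)) ≤ ∑ t : ↥S, G t * (t:ℝ) :=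
        Finset.sum_le_sum fun t _ => h1 t
      have h3 : (∑ t : ↥S, G t * (if s ≤ t then (s:ℝ) else m)) = q * s + (1 - q) * m := by
        have : ∀ t : ↥S, G t * (if s ≤ t then (s:ℝ) else m) =
            if s ≤ t then G t * s else G t * m := by
          intro t; by_cases h : s ≤ t <;> simp [h]
        rw [Finset.sum_congr rfl fun t _ => this t, Finset.sum_ite,
          ← Finset.sum_mul, ← Finset.sum_mul]
        have htot : (∑ t ∈ T, G t) + ∑ t ∈ Finset.univ.filter (fun t : ↥S => ¬ s ≤ t), G t = 1 := by
          rw [hT]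
          rw [Finset.sum_filter_add_sum_filter_not]
          exact hGsum
        have : (∑ t ∈ Finset.univ.filter (fun t : ↥S => ¬ s ≤ t), G t) = 1 - q := by
          rw [hq]; linarith
        rw [this, ← hT, ← hq]
      linarith
    have final : m * (1 - β) + (s:ℝ) * β ≤ q * s + (1 - q) * m := by
      nlinarith [mul_nonneg (sub_nonneg.mpr hβq) (sub_nonneg.mpr hms)]
    exact final.trans key
  -- the target value is attained at F β
  have hval : distMean S (F β) = m * (1 - β) + (s:ℝ) * β := by
    rw [hFmean]; ring
  have hmemT : m * (1 - β) + (s:ℝ) * β ∈ distMean S '' likelySorted S n A α :=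
    ⟨F β, hcl, hval⟩
  unfold pessimal
  rw [← hA]
  apply le_antisymm
  · exact csInf_le ⟨m * (1 - β) + (s:ℝ) * β, by
      rintro x ⟨G, hG, rfl⟩; exact hlb hG⟩ hmemT
  · exact le_csInf ⟨_, hmemT⟩ (by rintro x ⟨G, hG, rfl⟩; exact hlb hG)

end
end

section
/- Fix x ∈ Ω, α ∈ [0,1), and a total preorder R on Ω with 𝒢(Ω(x,R), α) nonempty. Suppose there exists C ⊆ S such that for all distributions G, H on S that agree pointwise and cumulatively on C, P_G[Ω(x,R)] = P_H[Ω(x,R)]. Then B_R^*(x) = inf{E[F] : F ∈ 𝒻_{C^+}(Ω(x,R), α)}. -/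
noncomputable section

/-- `G` and `H` agree pointwise on `C`. -/
def ptAgree {S : Finset ℝ} (C : Set ↥S) (G H : EuclideanSpace ℝ ↥S) : Prop :=
  ∀ c ∈ C, G c = H c

open Classical in
/-- `G` and `H` agree cumulatively on `C`. -/
def cumAgree (S : Finset ℝ) (C : Set ↥S) (G H : EuclideanSpace ℝ ↥S) : Prop :=
  ∀ c ∈ C, (∑ s : ↥S, if s ≤ c then G s else 0) = ∑ s : ↥S, if s ≤ c then H s else 0

/-- The refinement `𝒻_C`: distributions supported inside `C`. -/
def refinement (S : Finset ℝ) (C : Set ↥S) : Set (EuclideanSpace ℝ ↥S) :=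
  {F ∈ distSet S | ∀ s, s ∉ C → F s = 0}

/-- `𝒢_C(A, α) = 𝒻_C ∩ 𝒢(A, α)` (for a set `A` of sorted tuples). -/
def intLikelySortedC (S : Finset ℝ) (n : ℕ) (C : Set ↥S)
    (A : Set (Fin n → ↥S)) (α : ℝ) : Set (EuclideanSpace ℝ ↥S) :=
  refinement S C ∩ intLikelySorted S n A α

/-- `𝒻_C(A, α)`: the closure of `𝒢_C(A, α)`. -/
def likelySortedC (S : Finset ℝ) (n : ℕ) (C : Set ↥S)
    (A : Set (Fin n → ↥S)) (α : ℝ) : Set (EuclideanSpace ℝ ↥S) :=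
  closure (intLikelySortedC S n C A α)

/-- The minimum of `S`, as an element of `↥S`. -/
def sMinElt (S : Finset ℝ) (hS : S.Nonempty) : ↥S :=
  ⟨S.min' hS, S.min'_mem hS⟩

/-- The augmentation `C⁺ = C ∪ {S_min} ∪ {succ c : c ∈ C, c ≠ S_max}`, where
`succ c` is the smallest element of `S` greater than `c`. -/
def aug (S : Finset ℝ) (hS : S.Nonempty) (C : Set ↥S) : Set ↥S :=
  C ∪ {sMinElt S hS} ∪ {t | ∃ c ∈ C, c < t ∧ ∀ u : ↥S, c < u → t ≤ u}

/-! By continuity of the mean, both infima may be taken over the sets `𝒢` instead of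
their closures. Send each `s ∈ S` to the least `t ≤ s` that compares with every `c ∈ C` as `s` does;
such a `t` lies in `C⁺`, since otherwise its predecessor in `S` would compare the same way. Pushing a
distribution forward along this map preserves it pointwise and cumulatively on `C`, hence preserves
`P[Ω(x,R)]`, moves its support into `C⁺` and does not increase its mean. -/

section CutEquiv

variable {ι : Type*} [LinearOrder ι]

def CutEquiv (C : Set ι) (u v : ι) : Prop :=
  ∀ c ∈ C, (u ≤ c ↔ v ≤ c) ∧ (c ≤ u ↔ c ≤ v)

variable {C : Set ι}

theorem CutEquiv.refl (u : ι) : CutEquiv C u u :=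
  fun _ _ => ⟨Iff.rfl, Iff.rfl⟩

theorem CutEquiv.trans {u v w : ι} (huv : CutEquiv C u v) (hvw : CutEquiv C v w) :
    CutEquiv C u w :=
  fun c hc => ⟨(huv c hc).1.trans (hvw c hc).1, (huv c hc).2.trans (hvw c hc).2⟩

theorem CutEquiv.eq_iff {u v : ι} (h : CutEquiv C u v) {c : ι} (hc : c ∈ C) :
    u = c ↔ v = c := by
  rw [le_antisymm_iff, le_antisymm_iff, (h c hc).1, (h c hc).2]

end CutEquiv

theorem mem_aug_of_forall_lt_not_cutEquiv {S : Finset ℝ} (hS : S.Nonempty) {C : Set ↥S}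
    {t : ↥S} (ht : ∀ u < t, ¬ CutEquiv C u t) : t ∈ aug S hS C := by
  classical
  by_contra hnot
  simp only [aug, Set.mem_union, Set.mem_singleton_iff, Set.mem_ofPred_eq, not_or, not_exists,
    not_and] at hnot
  obtain ⟨⟨htC, htmin⟩, htsucc⟩ := hnot
  have hlt : sMinElt S hS < t := lt_of_le_of_ne (S.min'_le _ t.2) (Ne.symm htmin)
  set P := Finset.univ.filter (· < t)
  have hP : P.Nonempty := ⟨_, by simpa [P] using hlt⟩
  set p := P.max' hP
  have hpt : p < t := (Finset.mem_filter.1 (P.max'_mem hP)).2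
  have hpred : ∀ u, u ≤ p ↔ u < t := fun u =>
    ⟨fun hu => hu.trans_lt hpt, fun hu => P.le_max' u (by simpa [P] using hu)⟩
  have hpC : p ∉ C := fun hp =>
    htsucc p hp hpt fun u hu => not_lt.1 fun hut => ((hpred u).2 hut).not_gt hu
  refine ht p hpt fun c hc => ?_
  have hcp : c ≠ p := fun h => hpC (h ▸ hc)
  have hct : c ≠ t := fun h => htC (h ▸ hc)
  constructor
  · rw [← not_lt, ← not_lt, lt_iff_le_and_ne, hpred, and_iff_left hcp]
  · rw [hpred, lt_iff_le_and_ne, and_iff_left hct]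

theorem exists_mem_aug_le_cutEquiv {S : Finset ℝ} (hS : S.Nonempty) (C : Set ↥S) (s : ↥S) :
    ∃ t ∈ aug S hS C, t ≤ s ∧ CutEquiv C t s := by
  classical
  set T := Finset.univ.filter (CutEquiv C · s)
  have hsT : s ∈ T := by simpa [T] using CutEquiv.refl s
  have hT : T.Nonempty := ⟨s, hsT⟩
  have htT : CutEquiv C (T.min' hT) s := by simpa [T] using T.min'_mem hT
  refine ⟨T.min' hT, mem_aug_of_forall_lt_not_cutEquiv hS fun u hu hut => ?_,
    T.min'_le s hsT, htT⟩
  exact (T.min'_le u (by simpa [T] using hut.trans htT)).not_gt hu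

section Pushforward

variable {ι : Type*} [Fintype ι] [DecidableEq ι]

def pushforward (π : ι → ι) (F : EuclideanSpace ℝ ι) : EuclideanSpace ℝ ι :=
  WithLp.toLp 2 fun t => ∑ u, if π u = t then F u else 0

theorem sum_pushforward_mul (π : ι → ι) (F : EuclideanSpace ℝ ι) (g : ι → ℝ) :
    ∑ t, pushforward π F t * g t = ∑ u, F u * g (π u) := by
  simp only [pushforward, PiLp.toLp_apply, Finset.sum_mul, ite_mul, zero_mul]
  rw [Finset.sum_comm]
  simp

end Pushforward

section PushforwardDistribution

variable {S : Finset ℝ} (π : ↥S → ↥S) {F : EuclideanSpace ℝ ↥S}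

theorem pushforward_apply_eq_zero {D : Set ↥S} (hπ : ∀ u, π u ∈ D) {t : ↥S} (ht : t ∉ D) :
    pushforward π F t = 0 :=
  Finset.sum_eq_zero fun u _ => if_neg fun (h : π u = t) => ht (h ▸ hπ u)

theorem pushforward_mem_distSet (hF : F ∈ distSet S) : pushforward π F ∈ distSet S := by
  refine ⟨fun t => Finset.sum_nonneg fun u _ => ?_, ?_⟩
  · split_ifs
    exacts [hF.1 u, le_rfl]
  · simpa only [mul_one, hF.2] using sum_pushforward_mul π F fun _ => 1

theorem pushforward_mem_refinement {D : Set ↥S} (hπ : ∀ u, π u ∈ D) (hF : F ∈ distSet S) :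
    pushforward π F ∈ refinement S D :=
  ⟨pushforward_mem_distSet π hF, fun _ => pushforward_apply_eq_zero π hπ⟩

variable {C : Set ↥S}

theorem ptAgree_pushforward (hπ : ∀ u, CutEquiv C (π u) u) (F : EuclideanSpace ℝ ↥S) :
    ptAgree C F (pushforward π F) := by
  intro c hc
  have := sum_pushforward_mul π F fun t => if t = c then 1 else 0
  simp only [mul_boole, (hπ _).eq_iff hc] at this
  simpa using this.symm

theorem cumAgree_pushforward (hπ : ∀ u, CutEquiv C (π u) u) (F : EuclideanSpace ℝ ↥S) :
    cumAgree S C F (pushforward π F) := by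
  intro c hc
  have := sum_pushforward_mul π F fun t => if t ≤ c then 1 else 0
  simp only [mul_boole, ((hπ _) c hc).1] at this
  exact this.symm

end PushforwardDistribution

theorem distMean_pushforward_le {S : Finset ℝ} {π : ↥S → ↥S} (hπ : ∀ u, π u ≤ u)
    {F : EuclideanSpace ℝ ↥S} (hF : F ∈ distSet S) : distMean S (pushforward π F) ≤ distMean S F :=
  (sum_pushforward_mul π F _).trans_le <| Finset.sum_le_sum fun u _ =>
    mul_le_mul_of_nonneg_left (hπ u) (hF.1 u)

theorem min'_le_distMean {S : Finset ℝ} (hS : S.Nonempty) {F : EuclideanSpace ℝ ↥S}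
    (hF : F ∈ distSet S) : S.min' hS ≤ distMean S F :=
  calc S.min' hS = ∑ s : ↥S, F s * S.min' hS := by rw [← Finset.sum_mul, hF.2, one_mul]
    _ ≤ distMean S F := Finset.sum_le_sum fun s _ =>
      mul_le_mul_of_nonneg_left (S.min'_le s s.2) (hF.1 s)

theorem csInf_image_closure {X β : Type*} [TopologicalSpace X] [ConditionallyCompleteLattice β]
    [TopologicalSpace β] [ClosedIciTopology β] {f : X → β} (hf : Continuous f) {T : Set X}
    (hT : T.Nonempty) (hbdd : BddBelow (f '' T)) : sInf (f '' closure T) = sInf (f '' T) :=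
  ((isGLB_iff_of_subset_of_subset_closure (Set.image_mono subset_closure)
    (image_closure_subset_closure_image hf)).1 (isGLB_csInf (hT.image f) hbdd)).csInf_eq
    ((hT.mono subset_closure).image f)

theorem csInf_image_eq_of_subset_of_forall_exists_le {X β : Type*}
    [ConditionallyCompleteLattice β] {f : X → β} {T U : Set X} (hUT : U ⊆ T) (hU : U.Nonempty)
    (hbdd : BddBelow (f '' T)) (hle : ∀ a ∈ T, ∃ b ∈ U, f b ≤ f a) :
    sInf (f '' T) = sInf (f '' U) := by
  refine le_antisymm (csInf_le_csInf hbdd (hU.image f) (Set.image_mono hUT)) ?_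
  refine le_csInf ((hU.mono hUT).image f) ?_
  rintro _ ⟨a, ha, rfl⟩
  obtain ⟨b, hb, hba⟩ := hle a ha
  exact (csInf_le (hbdd.mono (Set.image_mono hUT)) ⟨b, hb, rfl⟩).trans hba

theorem sInf_distMean_likelySorted_eq_likelySortedC {S : Finset ℝ} (hS : S.Nonempty) {n : ℕ}
    {A : Set (Fin n → ↥S)} {α : ℝ} {D : Set ↥S} (hne : (intLikelySorted S n A α).Nonempty)
    {π : ↥S → ↥S} (hπD : ∀ u, π u ∈ D) (hπle : ∀ u, π u ≤ u)
    (hprob : ∀ F ∈ distSet S, probSorted S n (pushforward π F) A = probSorted S n F A) :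
    sInf (distMean S '' likelySorted S n A α) = sInf (distMean S '' likelySortedC S n D A α) := by
  have hpush : ∀ F ∈ intLikelySorted S n A α, pushforward π F ∈ intLikelySortedC S n D A α :=
    fun F ⟨hF, hFα⟩ => ⟨pushforward_mem_refinement π hπD hF,
      pushforward_mem_distSet π hF, (hprob F hF).symm ▸ hFα⟩
  have hsub : intLikelySortedC S n D A α ⊆ intLikelySorted S n A α := Set.inter_subset_right
  have hbdd : BddBelow (distMean S '' intLikelySorted S n A α) :=
    ⟨S.min' hS, Set.forall_mem_image.2 fun F hF => min'_le_distMean hS hF.1⟩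
  have hcont : Continuous (distMean S) := by unfold distMean; fun_prop
  have hneC : (intLikelySortedC S n D A α).Nonempty := ⟨_, hpush _ hne.some_mem⟩
  rw [likelySorted, likelySortedC, csInf_image_closure hcont hne hbdd,
    csInf_image_closure hcont hneC (hbdd.mono (Set.image_mono hsub))]
  exact csInf_image_eq_of_subset_of_forall_exists_le hsub hneC hbdd fun F hF =>
    ⟨_, hpush F hF, distMean_pushforward_le hπle hF.1⟩

theorem stmt16_general (S : Finset ℝ) (hS : S.Nonempty) (n : ℕ) (α : ℝ)
    (r : (Fin n → ↥S) → (Fin n → ↥S) → Prop)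
    (x : Fin n → ↥S)
    (hne : (intLikelySorted S n (upperSet S n r x) α).Nonempty)
    (C : Set ↥S)
    (hC : ∀ G ∈ distSet S, ∀ H ∈ distSet S, ptAgree C G H → cumAgree S C G H →
      probSorted S n G (upperSet S n r x) = probSorted S n H (upperSet S n r x)) :
    pessimal S n r α x =
      sInf (distMean S '' likelySortedC S n (aug S hS C) (upperSet S n r x) α) := by
  choose π hπaug hπle hπcut using exists_mem_aug_le_cutEquiv hS C
  exact sInf_distMean_likelySorted_eq_likelySortedC hS hne hπaug hπle fun F hF =>
    (hC F hF _ (pushforward_mem_distSet π hF) (ptAgree_pushforward π hπcut F)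
      (cumAgree_pushforward π hπcut F)).symm

/-- if all distributions agreeing pointwise and cumulatively on
`C ⊆ S` assign the same probability to the upper set `Ω(x, R)`, then the
pessimal bound is attained over the refinement supported on `C⁺`:
`B_R^*(x) = inf {E[F] : F ∈ 𝒻_{C⁺}(Ω(x,R), α)}`. -/
theorem stmt16 (S : Finset ℝ) (hS : S.Nonempty) (n : ℕ) (hn : 1 ≤ n)
    (α : ℝ) (hα0 : 0 ≤ α) (hα1 : α < 1)
    (r : (Fin n → ↥S) → (Fin n → ↥S) → Prop)
    (hrefl : ∀ x ∈ sortedTuples S n, r x x)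
    (htrans : ∀ x ∈ sortedTuples S n, ∀ y ∈ sortedTuples S n, ∀ z ∈ sortedTuples S n,
      r x y → r y z → r x z)
    (htotal : ∀ x ∈ sortedTuples S n, ∀ y ∈ sortedTuples S n, r x y ∨ r y x)
    (x : Fin n → ↥S) (hx : x ∈ sortedTuples S n)
    (hne : (intLikelySorted S n (upperSet S n r x) α).Nonempty)
    (C : Set ↥S)
    (hC : ∀ G ∈ distSet S, ∀ H ∈ distSet S, ptAgree C G H → cumAgree S C G H →
      probSorted S n G (upperSet S n r x) = probSorted S n H (upperSet S n r x)) :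
    pessimal S n r α x =
      sInf (distMean S '' likelySortedC S n (aug S hS C) (upperSet S n r x) α) :=
  stmt16_general S hS n α r x hne C hC

end
end

section
/- Let x be an n-tuple with entries in S and let S_x = {x_1,…,x_n} be the set of its values. Suppose distributions G and G' on S agree pointwise and cumulatively on S_x. Let Y = (Y_1,…,Y_n) be n i.i.d. draws from the respective distribution, with order statistics Y_(1) ≤ … ≤ Y_(n), and let x_(1) ≤ … ≤ x_(n) be the order statistics of x. Then for every i ∈ {1,…,n}: (a) P_G[Y_(j) = x_(j) for all j ≤ i] = P_{G'}[Y_(j) = x_(j) for all j ≤ i], and (b) P_G[x_(i) < Y_(i) and Y_(j) = x_(j) for all j < i] = P_{G'}[x_(i) < Y_(i) and Y_(j) = x_(j) for all j < i]. -/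
noncomputable section

/-! Let `c = x_(i)` and collapse every value above `c` to a single symbol. Whether `y_(j) ≤ t`
for `t ≤ c` depends only on `#{k | y_k ≤ t}`, so both events are unions of fibres of the
collapsed tuple, and their probability is a sum over collapsed tuples of products of fibre masses.
A fibre is either a single value `s ≤ c` occurring in the event, hence `s ∈ S_x`, with mass
`F(s)`, or the tail `{s > c}`, with mass `1 - F(≤ c)`; both agree for `G` and `G'`. -/

open Finset

section Truncation

variable {α : Type*} [LinearOrder α]

def truncAt (c a : α) : Option α := if a ≤ c then some a else none

lemma le_iff_of_truncAt_eq {c a b t : α} (h : truncAt c a = truncAt c b) (ht : t ≤ c) :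
    a ≤ t ↔ b ≤ t := by
  unfold truncAt at h
  split_ifs at h with ha hb hb
  · cases h; rfl
  · exact ⟨fun h => absurd (h.trans ht) ha, fun h => absurd (h.trans ht) hb⟩

lemma sum_truncAt_fiber [Fintype α] [DecidableEq α] {M : Type*} [AddCommMonoid M] (F : α → M)
    (c a : α) :
    ∑ s with truncAt c s = truncAt c a, F s = if a ≤ c then F a else ∑ s with ¬ s ≤ c, F s := by
  by_cases ha : a ≤ c
  · have fiber (s : α) : truncAt c s = truncAt c a ↔ s = a := by
      by_cases hs : s ≤ c
      · simp [truncAt, hs, ha]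
      · simpa [truncAt, hs, ha] using fun h : s = a => hs (h ▸ ha)
    simp only [fiber, if_pos ha, filter_eq', mem_univ, if_true, sum_singleton]
  · have fiber (s : α) : truncAt c s = truncAt c a ↔ ¬ s ≤ c := by
      by_cases hs : s ≤ c <;> simp [truncAt, hs, ha]
    simp only [fiber, if_neg ha]

end Truncation

section Pushforward

variable {S : Finset ℝ} {n : ℕ} {β : Type*} [DecidableEq β]

open Classical in
lemma probOf_eq_sum_image (F : EuclideanSpace ℝ ↥S) (σ : ↥S → β) {A : Set (Fin n → ↥S)}
    (hA : ∀ y y', σ ∘ y = σ ∘ y' → y ∈ A → y' ∈ A) :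
    probOf S n F A = ∑ z ∈ (univ.filter (· ∈ A)).image (fun y : Fin n → ↥S => σ ∘ y),
      ∏ k, ∑ s with σ s = z k, F s := by
  rw [probOf, ← sum_filter]
  refine (sum_image' _ fun y hy => ?_).symm
  rw [prod_univ_sum]
  refine sum_congr (ext fun y' => ?_) fun _ _ => rfl
  simp only [Fintype.mem_piFinset, mem_filter, mem_univ, true_and, Function.comp_apply, funext_iff]
  exact ⟨fun h => ⟨hA y y' (funext fun k => (h k).symm) (mem_filter.1 hy).2, h⟩, fun h => h.2⟩

lemma probOf_congr_of_sum_fiber_eq (σ : ↥S → β) {A : Set (Fin n → ↥S)}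
    {G G' : EuclideanSpace ℝ ↥S} (hA : ∀ y y', σ ∘ y = σ ∘ y' → y ∈ A → y' ∈ A)
    (hmass : ∀ y ∈ A, ∀ k, ∑ s with σ s = σ (y k), G s = ∑ s with σ s = σ (y k), G' s) :
    probOf S n G A = probOf S n G' A := by
  classical
  rw [probOf_eq_sum_image G σ hA, probOf_eq_sum_image G' σ hA]
  refine sum_congr rfl fun z hz => ?_
  obtain ⟨y, hy, rfl⟩ := mem_image.1 hz
  exact prod_congr rfl fun k _ => hmass y (mem_filter.1 hy).2 k

end Pushforward

section OrderStatistics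

variable {S : Finset ℝ} {n : ℕ}

lemma card_filter_sortTup_le (y : Fin n → ↥S) (t : ↥S) :
    #{k | sortTup S n y k ≤ t} = #{k | y k ≤ t} :=
  card_equiv (Tuple.sort y) fun k => by simp only [mem_filter, mem_univ, true_and]; rfl

lemma sortTup_le_iff (y : Fin n → ↥S) (j : Fin n) (t : ↥S) :
    sortTup S n y j ≤ t ↔ (j : ℕ) < #{k | y k ≤ t} := by
  rw [← card_filter_sortTup_le]
  exact (Tuple.lt_card_le_iff_apply_le_of_monotone (Tuple.monotone_sort y)).symm

lemma sortTup_le_iff_of_truncAt_eq {c t : ↥S} {y y' : Fin n → ↥S}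
    (h : truncAt c ∘ y = truncAt c ∘ y') (ht : t ≤ c) (j : Fin n) :
    sortTup S n y j ≤ t ↔ sortTup S n y' j ≤ t := by
  rw [sortTup_le_iff, sortTup_le_iff,
    filter_congr fun k _ => le_iff_of_truncAt_eq (congrFun h k) ht]

lemma sortTup_eq_of_truncAt_eq {c : ↥S} {y y' : Fin n → ↥S}
    (h : truncAt c ∘ y = truncAt c ∘ y') {j : Fin n} (hj : sortTup S n y j ≤ c) :
    sortTup S n y j = sortTup S n y' j := by
  have hj' : sortTup S n y' j ≤ c := (sortTup_le_iff_of_truncAt_eq h le_rfl j).1 hj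
  exact le_antisymm ((sortTup_le_iff_of_truncAt_eq h hj' j).2 le_rfl)
    ((sortTup_le_iff_of_truncAt_eq h hj j).1 le_rfl)

lemma mem_range_of_sortTup_eq_of_lt {x y : Fin n → ↥S} {i : Fin n}
    (hlt : ∀ j < i, sortTup S n y j = sortTup S n x j) (hi : sortTup S n x i ≤ sortTup S n y i)
    {k : Fin n} (hk : y k ≤ sortTup S n x i) : y k ∈ Set.range x := by
  obtain ⟨m, rfl⟩ : ∃ m, Tuple.sort y m = k := ⟨(Tuple.sort y).symm k, by simp⟩
  change sortTup S n y m ≤ _ at hk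
  change sortTup S n y m ∈ _
  rcases lt_or_ge m i with hm | hm
  · exact hlt m hm ▸ ⟨_, rfl⟩
  · exact le_antisymm hk (hi.trans (Tuple.monotone_sort y hm)) ▸ ⟨_, rfl⟩

end OrderStatistics

section Agreement

variable {S : Finset ℝ}

lemma sum_filter_not_le_eq_one_sub {F : EuclideanSpace ℝ ↥S} (hF : F ∈ distSet S) (c : ↥S) :
    ∑ s with ¬ s ≤ c, F s = 1 - ∑ s, if s ≤ c then F s else 0 := by
  rw [← hF.2, ← sum_filter, ← sum_filter_add_sum_filter_not univ (· ≤ c)]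
  ring

lemma sum_truncAt_fiber_eq_of_agree {C : Set ↥S} {G G' : EuclideanSpace ℝ ↥S}
    (hG : G ∈ distSet S) (hG' : G' ∈ distSet S) (hpt : ptAgree C G G') (hcum : cumAgree S C G G')
    {c a : ↥S} (hc : c ∈ C) (ha : a ≤ c → a ∈ C) :
    ∑ s with truncAt c s = truncAt c a, G s = ∑ s with truncAt c s = truncAt c a, G' s := by
  rw [sum_truncAt_fiber, sum_truncAt_fiber]
  split_ifs with hac
  · exact hpt a (ha hac)
  · rw [sum_filter_not_le_eq_one_sub hG, sum_filter_not_le_eq_one_sub hG', hcum c hc]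

end Agreement

theorem stmt19_general (S : Finset ℝ) (n : ℕ)
    (x : Fin n → ↥S)
    (G G' : EuclideanSpace ℝ ↥S) (hG : G ∈ distSet S) (hG' : G' ∈ distSet S)
    (hpt : ptAgree (Set.range x) G G') (hcum : cumAgree S (Set.range x) G G')
    (i : Fin n) :
    probOf S n G {y | ∀ j ≤ i, sortTup S n y j = sortTup S n x j} =
        probOf S n G' {y | ∀ j ≤ i, sortTup S n y j = sortTup S n x j} ∧
      probOf S n G {y | sortTup S n x i < sortTup S n y i ∧
          ∀ j < i, sortTup S n y j = sortTup S n x j} =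
        probOf S n G' {y | sortTup S n x i < sortTup S n y i ∧
          ∀ j < i, sortTup S n y j = sortTup S n x j} := by
  set c := sortTup S n x i
  have hc : c ∈ Set.range x := ⟨_, rfl⟩
  have hx : Monotone (sortTup S n x) := Tuple.monotone_sort x
  have hfiber := fun {a} => sum_truncAt_fiber_eq_of_agree (a := a) hG hG' hpt hcum hc
  refine ⟨probOf_congr_of_sum_fiber_eq (truncAt c) ?_ ?_,
    probOf_congr_of_sum_fiber_eq (truncAt c) ?_ ?_⟩
  · intro y y' h hy j hj
    exact (sortTup_eq_of_truncAt_eq h ((hy j hj).trans_le (hx hj))).symm.trans (hy j hj)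
  · intro y hy k
    exact hfiber (mem_range_of_sortTup_eq_of_lt (fun j hj => hy j hj.le) (hy i le_rfl).ge)
  · rintro y y' h ⟨hi, hy⟩
    refine ⟨lt_of_not_ge fun hi' => hi.not_ge ((sortTup_le_iff_of_truncAt_eq h le_rfl i).2 hi'),
      fun j hj => ?_⟩
    exact (sortTup_eq_of_truncAt_eq h ((hy j hj).trans_le (hx hj.le))).symm.trans (hy j hj)
  · rintro y ⟨hi, hy⟩ k
    exact hfiber (mem_range_of_sortTup_eq_of_lt hy hi.le)

/-- if `G` and `G'` agree pointwise and cumulatively on the set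
`S_x` of values of `x`, then for every `i`: (a) the probability that the first
`i` order statistics of an i.i.d. sample match those of `x` is the same under
`G` and `G'`, and (b) likewise for the event that the order statistics below
`i` match and the `i`-th strictly exceeds `x_(i)`. -/
theorem stmt19 (S : Finset ℝ) (hS : S.Nonempty) (n : ℕ) (hn : 1 ≤ n)
    (x : Fin n → ↥S)
    (G G' : EuclideanSpace ℝ ↥S) (hG : G ∈ distSet S) (hG' : G' ∈ distSet S)
    (hpt : ptAgree (Set.range x) G G') (hcum : cumAgree S (Set.range x) G G')
    (i : Fin n) :
    probOf S n G {y | ∀ j ≤ i, sortTup S n y j = sortTup S n x j} =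
        probOf S n G' {y | ∀ j ≤ i, sortTup S n y j = sortTup S n x j} ∧
      probOf S n G {y | sortTup S n x i < sortTup S n y i ∧
          ∀ j < i, sortTup S n y j = sortTup S n x j} =
        probOf S n G' {y | sortTup S n x i < sortTup S n y i ∧
          ∀ j < i, sortTup S n y j = sortTup S n x j} :=
  stmt19_general S n x G G' hG hG' hpt hcum i

end
end
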